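/- Let α be strictly increasing with α_n > 1, α_n → ∞, and lim_{n→∞} (log n)/α_n = 0 (i.e. Λ₀(α) is nuclear). Then σ(C; Λ₀(α)) = σ_pt(C; Λ₀(α)) = Σ = {1/m : m ≥ 1}; that is, every λ ∈ ℂ \ {1/m : m ≥ 1} is such that λI − C is bijective on Λ₀(α) with continuous inverse, and each 1/m is an eigenvalue of C on Λ₀(α). -/

import Mathlib

open Filter Finset Topology

noncomputable section

/-- The weight `w_k(n) = e^{-alpha_n / k}`.  Indices are shifted by one: the natural
numbers `k n : Nat` represent the indices `k+1` and `n+1` (both running from `1`). -/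
def wt (a : ℕ → ℝ) (k n : ℕ) : ℝ := Real.exp (-(a n) / ((k : ℝ) + 1))

/-- Membership in the power series space of finite type `Λ₀(α)`:
`x ∈ Λ₀(α)` iff `w_k(n)|x_n| → 0` for every `k ≥ 1`. -/
def memLambda (a : ℕ → ℝ) (x : ℕ → ℂ) : Prop :=
  ∀ k : ℕ, Tendsto (fun n => wt a k n * ‖x n‖) atTop (𝓝 0)

/-- The norm `p_k(x) = sup_n w_k(n)|x_n|` generating the Fréchet topology of `Λ₀(α)`. -/
def pk (a : ℕ → ℝ) (k : ℕ) (x : ℕ → ℂ) : ℝ := ⨆ n : ℕ, wt a k n * ‖x n‖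

/-- The discrete Cesàro operator `(C x)_n = (x_1 + ⋯ + x_n)/n` (0-indexed). -/
def cesaro (x : ℕ → ℂ) : ℕ → ℂ := fun n => (∑ i ∈ Finset.range (n + 1), x i) / ((n : ℂ) + 1)

/-- `lam` is an eigenvalue of the Cesàro operator on `Λ₀(α)`. -/
def IsEigen (a : ℕ → ℝ) (lam : ℂ) : Prop :=
  ∃ x : ℕ → ℂ, memLambda a x ∧ x ≠ 0 ∧ cesaro x = lam • x

/-- `lam` belongs to the resolvent set of the Cesàro operator on `Λ₀(α)`:
`lam • I - C` has a linear inverse `T` on `Λ₀(α)` which is continuous for the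
Fréchet topology generated by the norms `p_k`. -/
def InResolvent (a : ℕ → ℝ) (lam : ℂ) : Prop :=
  ∃ T : (ℕ → ℂ) → (ℕ → ℂ),
    (∀ x, memLambda a x → memLambda a (T x)) ∧
    (∀ x y, memLambda a x → memLambda a y → T (x + y) = T x + T y) ∧
    (∀ (c : ℂ) (x), memLambda a x → T (c • x) = c • T x) ∧
    (∀ k : ℕ, ∃ l : ℕ, ∃ M : ℝ, 0 < M ∧ ∀ x, memLambda a x → pk a k (T x) ≤ M * pk a l x) ∧
    (∀ x, memLambda a x → T (lam • x - cesaro x) = x) ∧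
    (∀ x, memLambda a x → lam • T x - cesaro (T x) = x)
/-!
For `λ ∉ Σ` the equation `λx - Cx = y` is solved by a recursion for the partial sums of `x`
whose growth factors `|λ(n+1)| / |λ(n+1) - 1|` are `1 + O(1/n)`; hence `(λI - C)⁻¹` is lower
triangular with entries of polynomial size `O(n^β)`. Since `α` is increasing, passing from the
weight `w_k` to `w_{k+1}` gains the factor `e^{-α_n/(k(k+1))}`, which by nuclearity beats every
power of `n`; so the inverse maps `Λ₀(α)` continuously into itself. For `λ = 1/(m+1)` the
sequence `x_n = binom(n, m)` is an eigenvector (hockey-stick identity), and it lies in `Λ₀(α)`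
for the same reason. An eigenvalue never lies in the resolvent set.
-/

section Weights

variable {a : ℕ → ℝ}

lemma wt_antitone (ha : Monotone a) (k : ℕ) : Antitone (wt a k) := fun m n hmn => by
  unfold wt
  gcongr
  exact ha hmn

lemma wt_eq_wt_succ_mul (k n : ℕ) :
    wt a k n = wt a (k + 1) n * Real.exp (-a n / (((k : ℝ) + 1) * ((k : ℝ) + 2))) := by
  unfold wt
  rw [← Real.exp_add]
  congr 1
  push_cast
  field_simp
  ring

lemma wt_mul_norm_le_pk {y : ℕ → ℂ} (hy : memLambda a y) (k n : ℕ) :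
    wt a k n * ‖y n‖ ≤ pk a k y :=
  le_ciSup (hy k).bddAbove_range n

lemma pk_nonneg {y : ℕ → ℂ} (hy : memLambda a y) (k : ℕ) : 0 ≤ pk a k y :=
  (mul_nonneg (Real.exp_pos _).le (norm_nonneg _)).trans (wt_mul_norm_le_pk hy k 0)

lemma wt_mul_sum_norm_le (ha : Monotone a) {y : ℕ → ℂ} (hy : memLambda a y) (k n : ℕ) :
    wt a k n * ∑ i ∈ range (n + 1), ‖y i‖ ≤ ((n : ℝ) + 1) * pk a k y := by
  rw [mul_sum]
  calc ∑ i ∈ range (n + 1), wt a k n * ‖y i‖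
      ≤ ∑ _i ∈ range (n + 1), pk a k y := by
        refine sum_le_sum fun i hi => le_trans ?_ (wt_mul_norm_le_pk hy k i)
        exact mul_le_mul_of_nonneg_right
          (wt_antitone ha k (Nat.lt_succ_iff.mp (mem_range.mp hi))) (norm_nonneg _)
    _ = ((n : ℝ) + 1) * pk a k y := by simp

lemma tendsto_pow_mul_exp_neg_div (htop : Tendsto a atTop atTop)
    (hnuc : Tendsto (fun n : ℕ => Real.log ((n : ℝ) + 1) / a n) atTop (𝓝 0))
    (β : ℕ) {c : ℝ} (hc : 0 < c) :
    Tendsto (fun n : ℕ => ((n : ℝ) + 1) ^ β * Real.exp (-a n / c)) atTop (𝓝 0) := by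
  have hexponent : Tendsto (fun n => a n * (β * (Real.log ((n : ℝ) + 1) / a n) - 1 / c))
      atTop atBot :=
    htop.atTop_mul_neg (neg_neg_of_pos (one_div_pos.mpr hc))
      (by simpa using (hnuc.const_mul (β : ℝ)).sub_const (1 / c))
  refine (Real.tendsto_exp_atBot.comp hexponent).congr' ?_
  filter_upwards [htop.eventually_gt_atTop 0] with n hn
  rw [Function.comp_apply, ← Real.exp_log (by positivity : (0 : ℝ) < (n : ℝ) + 1),
    ← Real.exp_nat_mul, ← Real.exp_add, Real.exp_log (by positivity)]
  congr 1
  field_simp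
  ring

end Weights

section LowerTriangular

variable {a : ℕ → ℝ}

lemma wt_mul_norm_le_of_norm_le_sum (ha : Monotone a) {y z : ℕ → ℂ} (hy : memLambda a y)
    {A : ℝ} {β : ℕ} (hA : 0 ≤ A)
    (hz : ∀ n, ‖z n‖ ≤ A * ((n : ℝ) + 1) ^ β * ∑ i ∈ range (n + 1), ‖y i‖) (k n : ℕ) :
    wt a k n * ‖z n‖ ≤
      A * (((n : ℝ) + 1) ^ (β + 1) * Real.exp (-a n / (((k : ℝ) + 1) * ((k : ℝ) + 2)))) *
        pk a (k + 1) y :=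
  calc wt a k n * ‖z n‖
      ≤ wt a k n * (A * ((n : ℝ) + 1) ^ β * ∑ i ∈ range (n + 1), ‖y i‖) :=
        mul_le_mul_of_nonneg_left (hz n) (Real.exp_pos _).le
    _ = A * ((n : ℝ) + 1) ^ β * Real.exp (-a n / (((k : ℝ) + 1) * ((k : ℝ) + 2))) *
          (wt a (k + 1) n * ∑ i ∈ range (n + 1), ‖y i‖) := by
        rw [wt_eq_wt_succ_mul]
        ring
    _ ≤ A * ((n : ℝ) + 1) ^ β * Real.exp (-a n / (((k : ℝ) + 1) * ((k : ℝ) + 2))) *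
          (((n : ℝ) + 1) * pk a (k + 1) y) :=
        mul_le_mul_of_nonneg_left (wt_mul_sum_norm_le ha hy (k + 1) n) (by positivity)
    _ = _ := by ring

lemma memLambda_of_norm_le_sum (ha : Monotone a) (htop : Tendsto a atTop atTop)
    (hnuc : Tendsto (fun n : ℕ => Real.log ((n : ℝ) + 1) / a n) atTop (𝓝 0))
    {y z : ℕ → ℂ} (hy : memLambda a y) {A : ℝ} {β : ℕ} (hA : 0 ≤ A)
    (hz : ∀ n, ‖z n‖ ≤ A * ((n : ℝ) + 1) ^ β * ∑ i ∈ range (n + 1), ‖y i‖) :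
    memLambda a z := fun k => by
  refine squeeze_zero (fun n => mul_nonneg (Real.exp_pos _).le (norm_nonneg _))
    (wt_mul_norm_le_of_norm_le_sum ha hy hA hz k) ?_
  simpa using ((tendsto_pow_mul_exp_neg_div htop hnuc (β + 1)
    (by positivity : (0 : ℝ) < ((k : ℝ) + 1) * ((k : ℝ) + 2))).const_mul A).mul_const
      (pk a (k + 1) y)

lemma exists_pk_le_of_norm_le_sum (ha : Monotone a) (htop : Tendsto a atTop atTop)
    (hnuc : Tendsto (fun n : ℕ => Real.log ((n : ℝ) + 1) / a n) atTop (𝓝 0))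
    {A : ℝ} {β : ℕ} (hA : 0 ≤ A) (k : ℕ) :
    ∃ M : ℝ, 0 < M ∧ ∀ y z : ℕ → ℂ, memLambda a y →
      (∀ n, ‖z n‖ ≤ A * ((n : ℝ) + 1) ^ β * ∑ i ∈ range (n + 1), ‖y i‖) →
      pk a k z ≤ M * pk a (k + 1) y := by
  obtain ⟨K, hK⟩ := (tendsto_pow_mul_exp_neg_div htop hnuc (β + 1)
    (by positivity : (0 : ℝ) < ((k : ℝ) + 1) * ((k : ℝ) + 2))).bddAbove_range
  refine ⟨max (A * K) 1, by positivity, fun y z hy hz => ciSup_le fun n => ?_⟩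
  calc wt a k n * ‖z n‖
      ≤ A * (((n : ℝ) + 1) ^ (β + 1) * Real.exp (-a n / (((k : ℝ) + 1) * ((k : ℝ) + 2)))) *
          pk a (k + 1) y := wt_mul_norm_le_of_norm_le_sum ha hy hA hz k n
    _ ≤ max (A * K) 1 * pk a (k + 1) y := by
        gcongr
        · exact pk_nonneg hy _
        · exact (mul_le_mul_of_nonneg_left (hK (Set.mem_range_self n)) hA).trans
            (le_max_left _ _)

end LowerTriangular

section Eigenvectors

lemma sum_range_choose_eq (m n : ℕ) :
    ∑ i ∈ range (n + 1), i.choose m = (n + 1).choose (m + 1) := by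
  induction n with
  | zero => cases m <;> simp [Nat.choose_succ_succ]
  | succ n ih => rw [sum_range_succ, ih, Nat.choose_succ_succ' (n + 1), add_comm]

lemma cesaro_choose (m : ℕ) :
    cesaro (fun n => (n.choose m : ℂ)) = (1 / ((m : ℂ) + 1)) • fun n => (n.choose m : ℂ) := by
  funext n
  have hmul : ((n : ℂ) + 1) * n.choose m = (n + 1).choose (m + 1) * ((m : ℂ) + 1) := by
    exact_mod_cast Nat.add_one_mul_choose_eq n m
  simp only [cesaro, Pi.smul_apply, smul_eq_mul, ← Nat.cast_sum, sum_range_choose_eq]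
  field_simp
  linear_combination -hmul

theorem isEigen_one_div_add_one {a : ℕ → ℝ} (htop : Tendsto a atTop atTop)
    (hnuc : Tendsto (fun n : ℕ => Real.log ((n : ℝ) + 1) / a n) atTop (𝓝 0)) (m : ℕ) :
    IsEigen a (1 / ((m : ℂ) + 1)) := by
  refine ⟨fun n => (n.choose m : ℂ), fun k => ?_, fun h => by simpa using congrFun h m,
    cesaro_choose m⟩
  refine squeeze_zero (fun n => mul_nonneg (Real.exp_pos _).le (norm_nonneg _)) (fun n => ?_)
    (tendsto_pow_mul_exp_neg_div htop hnuc m (by positivity : (0 : ℝ) < (k : ℝ) + 1))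
  rw [Complex.norm_natCast, wt, mul_comm]
  gcongr
  exact_mod_cast (Nat.choose_le_pow n m).trans (Nat.pow_le_pow_left n.le_succ m)

theorem not_inResolvent_of_isEigen {a : ℕ → ℝ} {lam : ℂ} (h : IsEigen a lam) :
    ¬ InResolvent a lam := by
  obtain ⟨x, hx, hx0, hcx⟩ := h
  rintro ⟨T, -, -, hsmul, -, hleft, -⟩
  have hT0 : T 0 = 0 := by simpa using hsmul 0 x hx
  apply hx0
  rw [← hleft x hx, hcx, sub_self, hT0]

end Eigenvectors

section Resolvent

variable (lam : ℂ)

/-- If `lam • x - cesaro x = y`, then `s n = x 0 + ⋯ + x (n - 1)` satisfies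
`lam * (s (n + 1) - s n) - s (n + 1) / (n + 1) = y n`; solving for `s (n + 1)` gives this
recursion. -/
def resolventSum (y : ℕ → ℂ) : ℕ → ℂ
  | 0 => 0
  | n + 1 => (lam * ((n : ℂ) + 1) * resolventSum y n + ((n : ℂ) + 1) * y n) /
      (lam * ((n : ℂ) + 1) - 1)

def resolventInv (y : ℕ → ℂ) (n : ℕ) : ℂ := resolventSum lam y (n + 1) - resolventSum lam y n

lemma resolventSum_add (x y : ℕ → ℂ) :
    ∀ n, resolventSum lam (x + y) n = resolventSum lam x n + resolventSum lam y n
  | 0 => by simp [resolventSum]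
  | n + 1 => by
    simp only [resolventSum, Pi.add_apply, resolventSum_add x y n]
    ring

lemma resolventSum_smul (c : ℂ) (y : ℕ → ℂ) :
    ∀ n, resolventSum lam (c • y) n = c * resolventSum lam y n
  | 0 => by simp [resolventSum]
  | n + 1 => by
    simp only [resolventSum, Pi.smul_apply, smul_eq_mul, resolventSum_smul c y n]
    ring

lemma resolventInv_add (x y : ℕ → ℂ) :
    resolventInv lam (x + y) = resolventInv lam x + resolventInv lam y := by
  funext n
  simp only [resolventInv, resolventSum_add, Pi.add_apply]
  ring

lemma resolventInv_smul (c : ℂ) (y : ℕ → ℂ) :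
    resolventInv lam (c • y) = c • resolventInv lam y := by
  funext n
  simp only [resolventInv, resolventSum_smul, Pi.smul_apply, smul_eq_mul]
  ring

variable {lam}

lemma resolventInv_right_inverse (hs : ∀ n : ℕ, lam * ((n : ℂ) + 1) ≠ 1) (y : ℕ → ℂ) :
    lam • resolventInv lam y - cesaro (resolventInv lam y) = y := by
  funext n
  have hd : lam * ((n : ℂ) + 1) - 1 ≠ 0 := sub_ne_zero.mpr (hs n)
  have hn : (n : ℂ) + 1 ≠ 0 := Nat.cast_add_one_ne_zero n
  simp only [Pi.sub_apply, Pi.smul_apply, smul_eq_mul, cesaro, resolventInv]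
  rw [sum_range_sub (resolventSum lam y), resolventSum, resolventSum, sub_zero]
  field_simp
  ring

lemma resolventSum_sub_cesaro (hs : ∀ n : ℕ, lam * ((n : ℂ) + 1) ≠ 1) (x : ℕ → ℂ) :
    ∀ n, resolventSum lam (lam • x - cesaro x) n = ∑ i ∈ range n, x i
  | 0 => rfl
  | n + 1 => by
    have hd : lam * ((n : ℂ) + 1) - 1 ≠ 0 := sub_ne_zero.mpr (hs n)
    have hn : (n : ℂ) + 1 ≠ 0 := Nat.cast_add_one_ne_zero n
    simp only [resolventSum, resolventSum_sub_cesaro hs x n, Pi.sub_apply, Pi.smul_apply,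
      smul_eq_mul, cesaro, sum_range_succ]
    field_simp
    ring

lemma resolventInv_left_inverse (hs : ∀ n : ℕ, lam * ((n : ℂ) + 1) ≠ 1) (x : ℕ → ℂ) :
    resolventInv lam (lam • x - cesaro x) = x := by
  funext n
  simp [resolventInv, resolventSum_sub_cesaro hs, sum_range_succ]

end Resolvent

section Growth

lemma one_add_div_mul_pow_le (c n : ℕ) :
    (1 + c / ((n : ℝ) + 2)) * ((n : ℝ) + 1) ^ c ≤ ((n : ℝ) + 2) ^ c :=
  calc (1 + c / ((n : ℝ) + 2)) * ((n : ℝ) + 1) ^ c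
      ≤ (1 + c * (1 / ((n : ℝ) + 1))) * ((n : ℝ) + 1) ^ c := by
        gcongr
        rw [mul_one_div]
        gcongr
        linarith
    _ ≤ (1 + 1 / ((n : ℝ) + 1)) ^ c * ((n : ℝ) + 1) ^ c := by
        gcongr
        exact one_add_mul_le_pow (by linarith [show (0 : ℝ) ≤ 1 / ((n : ℝ) + 1) by positivity]) c
    _ = ((n : ℝ) + 2) ^ c := by
        rw [← mul_pow]
        congr 1
        field_simp
        ring

lemma max_le_pow_mul_sum_of_le_one_add_div {s u : ℕ → ℝ} {c : ℕ} (hs0 : s 0 = 0)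
    (hu : ∀ n, 0 ≤ u n) (hs : ∀ n, s (n + 1) ≤ (1 + c / ((n : ℝ) + 1)) * s n + u n) (n : ℕ) :
    max (s n) (s (n + 1)) ≤ ((n : ℝ) + 1) ^ c * ∑ i ∈ range (n + 1), u i := by
  induction n with
  | zero => simpa [hs0, hu 0] using hs 0
  | succ n ih =>
    rw [max_le_iff] at ih ⊢
    set S := ∑ i ∈ range (n + 1), u i
    have hS : 0 ≤ S := sum_nonneg fun i _ => hu i
    have hcast : ((n + 1 : ℕ) : ℝ) + 1 = (n : ℝ) + 2 := by push_cast; ring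
    have hstep := hs (n + 1)
    rw [hcast] at hstep
    rw [hcast, sum_range_succ]
    constructor
    · calc s (n + 1) ≤ ((n : ℝ) + 1) ^ c * S := ih.2
        _ ≤ ((n : ℝ) + 2) ^ c * (S + u (n + 1)) := by
          gcongr <;> linarith [hu (n + 1)]
    · calc s (n + 1 + 1)
          ≤ (1 + c / ((n : ℝ) + 2)) * (((n : ℝ) + 1) ^ c * S) + 1 * u (n + 1) := by
            rw [one_mul]
            exact hstep.trans (by gcongr; exact ih.2)
        _ ≤ ((n : ℝ) + 2) ^ c * S + ((n : ℝ) + 2) ^ c * u (n + 1) := by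
          rw [← mul_assoc]
          gcongr
          · exact one_add_div_mul_pow_le c n
          · exact hu _
          · exact one_le_pow₀ (by linarith)
        _ = ((n : ℝ) + 2) ^ c * (S + u (n + 1)) := by ring

lemma norm_natCast_add_one (n : ℕ) : ‖(n : ℂ) + 1‖ = (n : ℝ) + 1 := by
  exact_mod_cast Complex.norm_natCast (n + 1)

variable {lam : ℂ}

lemma norm_resolventSum_succ_le (y : ℕ → ℂ) (n : ℕ) :
    ‖resolventSum lam y (n + 1)‖ ≤
      ‖lam * ((n : ℂ) + 1)‖ / ‖lam * ((n : ℂ) + 1) - 1‖ * ‖resolventSum lam y n‖ +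
        ((n : ℝ) + 1) / ‖lam * ((n : ℂ) + 1) - 1‖ * ‖y n‖ := by
  rw [resolventSum, norm_div, div_mul_eq_mul_div, div_mul_eq_mul_div, ← add_div]
  gcongr
  refine (norm_add_le _ _).trans_eq ?_
  rw [norm_mul, norm_mul, norm_mul, norm_natCast_add_one]

lemma tendsto_div_norm_mul_sub_one (hlam : lam ≠ 0) :
    Tendsto (fun n : ℕ => ((n : ℝ) + 1) / ‖lam * ((n : ℂ) + 1) - 1‖) atTop (𝓝 ‖lam‖⁻¹) := by
  have hlim : Tendsto (fun n : ℕ => ‖lam - 1 / ((n : ℂ) + 1)‖⁻¹) atTop (𝓝 ‖lam‖⁻¹) := by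
    simpa using ((tendsto_const_nhds (x := lam)).sub
      (tendsto_one_div_add_atTop_nhds_zero_nat (𝕜 := ℂ))).norm.inv₀ (by simpa using hlam)
  refine hlim.congr fun n => ?_
  have hn : (n : ℂ) + 1 ≠ 0 := Nat.cast_add_one_ne_zero n
  rw [show lam * ((n : ℂ) + 1) - 1 = ((n : ℂ) + 1) * (lam - 1 / ((n : ℂ) + 1)) by
    field_simp, norm_mul, norm_natCast_add_one]
  field_simp

lemma exists_resolvent_coeff_bounds (hs : ∀ n : ℕ, lam * ((n : ℂ) + 1) ≠ 1) :
    ∃ c : ℕ, ∃ E : ℝ, ∀ n : ℕ,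
      ‖lam * ((n : ℂ) + 1)‖ / ‖lam * ((n : ℂ) + 1) - 1‖ ≤ 1 + c / ((n : ℝ) + 1) ∧
        1 / ‖lam * ((n : ℂ) + 1) - 1‖ ≤ E := by
  rcases eq_or_ne lam 0 with rfl | hlam
  · exact ⟨0, 1, fun n => by simp⟩
  obtain ⟨K, hK⟩ := (tendsto_div_norm_mul_sub_one hlam).bddAbove_range
  refine ⟨⌈K⌉₊, K, fun n => ?_⟩
  have hd : 0 < ‖lam * ((n : ℂ) + 1) - 1‖ := norm_pos_iff.mpr (sub_ne_zero.mpr (hs n))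
  have hKn : ((n : ℝ) + 1) / ‖lam * ((n : ℂ) + 1) - 1‖ ≤ K := hK (Set.mem_range_self n)
  constructor
  · calc ‖lam * ((n : ℂ) + 1)‖ / ‖lam * ((n : ℂ) + 1) - 1‖
        ≤ (‖lam * ((n : ℂ) + 1) - 1‖ + 1) / ‖lam * ((n : ℂ) + 1) - 1‖ := by
          gcongr
          simpa using norm_add_le (lam * ((n : ℂ) + 1) - 1) 1
      _ = 1 + ((n : ℝ) + 1) / ‖lam * ((n : ℂ) + 1) - 1‖ / ((n : ℝ) + 1) := by
          field_simp
      _ ≤ 1 + ⌈K⌉₊ / ((n : ℝ) + 1) := by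
          gcongr
          exact hKn.trans (Nat.le_ceil K)
  · refine le_trans ?_ hKn
    gcongr
    exact le_add_of_nonneg_left n.cast_nonneg

lemma exists_norm_resolventInv_le (hs : ∀ n : ℕ, lam * ((n : ℂ) + 1) ≠ 1) :
    ∃ A : ℝ, 0 ≤ A ∧ ∃ β : ℕ, ∀ (y : ℕ → ℂ) (n : ℕ),
      ‖resolventInv lam y n‖ ≤ A * ((n : ℝ) + 1) ^ β * ∑ i ∈ range (n + 1), ‖y i‖ := by
  obtain ⟨c, E, hcE⟩ := exists_resolvent_coeff_bounds hs
  have hE : 0 ≤ E := (one_div_nonneg.mpr (norm_nonneg _)).trans (hcE 0).2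
  refine ⟨2 * E, by positivity, c + 1, fun y n => ?_⟩
  have hrec := max_le_pow_mul_sum_of_le_one_add_div (s := fun n => ‖resolventSum lam y n‖)
    (u := fun i => E * ((i : ℝ) + 1) * ‖y i‖) (by simp [resolventSum]) (fun i => by positivity)
    (fun i => (norm_resolventSum_succ_le y i).trans (by
      rw [div_eq_mul_one_div ((i : ℝ) + 1), mul_comm ((i : ℝ) + 1)]
      gcongr
      exacts [(hcE i).1, (hcE i).2])) n
  rw [max_le_iff] at hrec
  have hsum : ∑ i ∈ range (n + 1), E * ((i : ℝ) + 1) * ‖y i‖ ≤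
      E * ((n : ℝ) + 1) * ∑ i ∈ range (n + 1), ‖y i‖ := by
    rw [mul_sum]
    refine sum_le_sum fun i hi => ?_
    gcongr
    exact_mod_cast Nat.lt_succ_iff.mp (mem_range.mp hi)
  calc ‖resolventInv lam y n‖
      ≤ ‖resolventSum lam y (n + 1)‖ + ‖resolventSum lam y n‖ := norm_sub_le _ _
    _ ≤ 2 * (((n : ℝ) + 1) ^ c * (E * ((n : ℝ) + 1) * ∑ i ∈ range (n + 1), ‖y i‖)) := by
      have := mul_le_mul_of_nonneg_left hsum (by positivity : (0 : ℝ) ≤ ((n : ℝ) + 1) ^ c)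
      linarith [hrec.1, hrec.2]
    _ = 2 * E * ((n : ℝ) + 1) ^ (c + 1) * ∑ i ∈ range (n + 1), ‖y i‖ := by ring

theorem inResolvent_of_forall_mul_ne_one {a : ℕ → ℝ} (ha : Monotone a)
    (htop : Tendsto a atTop atTop)
    (hnuc : Tendsto (fun n : ℕ => Real.log ((n : ℝ) + 1) / a n) atTop (𝓝 0))
    (hs : ∀ n : ℕ, lam * ((n : ℂ) + 1) ≠ 1) : InResolvent a lam := by
  obtain ⟨A, hA, β, hbound⟩ := exists_norm_resolventInv_le hs
  refine ⟨resolventInv lam, fun y hy => memLambda_of_norm_le_sum ha htop hnuc hy hA (hbound y),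
    fun x y _ _ => resolventInv_add lam x y, fun c x _ => resolventInv_smul lam c x,
    fun k => ?_, fun x _ => resolventInv_left_inverse hs x,
    fun y _ => resolventInv_right_inverse hs y⟩
  obtain ⟨M, hM, hpk⟩ := exists_pk_le_of_norm_le_sum ha htop hnuc hA (β := β) k
  exact ⟨k + 1, M, hM, fun y hy => hpk y _ hy (hbound y)⟩

end Growth

theorem stmt8_general (a : ℕ → ℝ) (hmono : StrictMono a)
    (htop : Tendsto a atTop atTop)
    (hnuc : Tendsto (fun n : ℕ => Real.log ((n : ℝ) + 1) / a n) atTop (𝓝 0)) :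
    {lam : ℂ | ¬ InResolvent a lam} = {lam : ℂ | ∃ m : ℕ, lam = 1 / ((m : ℂ) + 1)} ∧
    {lam : ℂ | IsEigen a lam} = {lam : ℂ | ∃ m : ℕ, lam = 1 / ((m : ℂ) + 1)} := by
  have hres : ∀ lam : ℂ, (∀ m : ℕ, lam ≠ 1 / ((m : ℂ) + 1)) → InResolvent a lam :=
    fun lam hne => inResolvent_of_forall_mul_ne_one hmono.monotone htop hnuc fun n heq =>
      hne n (eq_one_div_of_mul_eq_one_left heq)
  have heig : ∀ m : ℕ, IsEigen a (1 / ((m : ℂ) + 1)) := isEigen_one_div_add_one htop hnuc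
  constructor <;> ext lam <;> constructor
  · exact fun h => not_forall_not.mp fun hne => h (hres lam hne)
  · rintro ⟨m, rfl⟩
    exact not_inResolvent_of_isEigen (heig m)
  · exact fun h => not_forall_not.mp fun hne => not_inResolvent_of_isEigen h (hres lam hne)
  · rintro ⟨m, rfl⟩
    exact heig m

/-- if `Λ₀(α)` is nuclear (i.e. `(log n)/α_n → 0`), then
`σ(C; Λ₀(α)) = σ_pt(C; Λ₀(α)) = Σ = {1/m : m ≥ 1}`. -/
theorem stmt8 (a : ℕ → ℝ) (hmono : StrictMono a) (h1 : ∀ n, 1 < a n)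
    (htop : Tendsto a atTop atTop)
    (hnuc : Tendsto (fun n : ℕ => Real.log ((n : ℝ) + 1) / a n) atTop (𝓝 0)) :
    {lam : ℂ | ¬ InResolvent a lam} = {lam : ℂ | ∃ m : ℕ, lam = 1 / ((m : ℂ) + 1)} ∧
    {lam : ℂ | IsEigen a lam} = {lam : ℂ | ∃ m : ℕ, lam = 1 / ((m : ℂ) + 1)} :=
  stmt8_general a hmono htop hnuc

end
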